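/- Let W ∈ B(Y,X) be nonzero and let A ∈ B(X,Y) be Wg-Drazin invertible. Then (WA)² ∈ B(X) is generalized Drazin invertible, and AWA^{⊗,W} = A^{⊗,W}WA holds if and only if ((WA)^⊗)² = ((WA)²)^⊗, where T^⊗ denotes the weak group inverse. Moreover, if these equivalent conditions hold, then A^{⊗,W} = A^{d,W}. -/

import Mathlib

open ContinuousLinearMap

variable {X Y : Type*}
  [NormedAddCommGroup X] [InnerProductSpace ℂ X] [CompleteSpace X]
  [NormedAddCommGroup Y] [InnerProductSpace ℂ Y] [CompleteSpace Y]

/-- An operator is quasinilpotent if its spectrum equals `{0}`. -/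
def IsQuasinilpotent (T : X →L[ℂ] X) : Prop := spectrum ℂ T = {0}

/-- `B` is the generalized Drazin inverse of `A`. -/
def IsGDrazinInv (A B : X →L[ℂ] X) : Prop :=
  A * B = B * A ∧ B * A * B = B ∧ IsQuasinilpotent (A - A * A * B)

/-- `B` is the Wg-Drazin inverse of `A` (relative to the weight `W`); quasinilpotence of
`A - AWBWA ∈ B(X,Y)` is taken relative to `W`, i.e. `W(A - AWBWA)` is quasinilpotent. -/
def IsWgDrazinInv (W : Y →L[ℂ] X) (A B : X →L[ℂ] Y) : Prop :=
  A ∘L W ∘L B = B ∘L W ∘L A ∧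
  B ∘L W ∘L A ∘L W ∘L B = B ∧
  IsQuasinilpotent (W ∘L (A - A ∘L W ∘L B ∘L W ∘L A))

/-- `P` is the orthogonal projection of the space onto the subspace `S`. -/
def IsOrthoProjOnto (P : X →L[ℂ] X) (S : Submodule ℂ X) : Prop :=
  P * P = P ∧ ContinuousLinearMap.adjoint P = P ∧ LinearMap.range (P : X →ₗ[ℂ] X) = S

/-- `P` is the idempotent with range `L` and kernel `M` (i.e. `P = P_{L,M}`). -/
def IsIdempotentOnAlong (P : X →L[ℂ] X) (L M : Submodule ℂ X) : Prop :=
  P * P = P ∧ LinearMap.range (P : X →ₗ[ℂ] X) = L ∧ LinearMap.ker (P : X →ₗ[ℂ] X) = M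

/-- Given the generalized Drazin inverse `Ad` of `A`, `B` is the core-EP inverse of `A`:
`AB` is the orthogonal projection onto `R(A^d)` and `R(B) ⊆ R(A^d)`. -/
def IsCoreEPInv (A Ad B : X →L[ℂ] X) : Prop :=
  IsOrthoProjOnto (A * B) (LinearMap.range (Ad : X →ₗ[ℂ] X)) ∧
    LinearMap.range (B : X →ₗ[ℂ] X) ≤ LinearMap.range (Ad : X →ₗ[ℂ] X)

/-- Given the generalized Drazin inverses `WAd` of `WA` and `AWd` of `AW`, `B` is the
weighted core-EP inverse of `A`: `WAWB` is the orthogonal projection onto `R((WA)^d)`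
and `R(B) ⊆ R((AW)^d)`. -/
def IsWCoreEPInv (W : Y →L[ℂ] X) (A : X →L[ℂ] Y) (WAd : X →L[ℂ] X) (AWd : Y →L[ℂ] Y)
    (B : X →L[ℂ] Y) : Prop :=
  IsOrthoProjOnto (W ∘L A ∘L W ∘L B) (LinearMap.range (WAd : X →ₗ[ℂ] X)) ∧
  LinearMap.range (B : X →ₗ[ℂ] Y) ≤ LinearMap.range (AWd : Y →ₗ[ℂ] Y)

/-- `B` is the group inverse of `A`. -/
def IsGroupInv (A B : X →L[ℂ] X) : Prop :=
  A * B = B * A ∧ B * A * B = B ∧ A * B * A = A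

/-- `S` is the Moore-Penrose inverse of `T`. -/
def IsMPInv (T : Y →L[ℂ] X) (S : X →L[ℂ] Y) : Prop :=
  T ∘L S ∘L T = T ∧ S ∘L T ∘L S = S ∧
  ContinuousLinearMap.adjoint (T ∘L S) = T ∘L S ∧
  ContinuousLinearMap.adjoint (S ∘L T) = S ∘L T

/-- `C` is the core inverse of `T`: `TC` is the orthogonal projection onto `R(T)`
and `R(C) ⊆ R(T)`. -/
def IsCoreInv (T C : X →L[ℂ] X) : Prop :=
  IsOrthoProjOnto (T * C) (LinearMap.range (T : X →ₗ[ℂ] X)) ∧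
    LinearMap.range (C : X →ₗ[ℂ] X) ≤ LinearMap.range (T : X →ₗ[ℂ] X)


/- ========================  auxiliary machinery  ======================== -/

section AuxAnalytic
open Filter Topology ENNReal

set_option linter.unusedSectionVars false in
private lemma aux_pow_tendsto {c : ℕ → ℝ≥0∞} (hc : Filter.Tendsto c Filter.atTop (nhds 0)) :
    Filter.Tendsto (fun n => c n ^ n) Filter.atTop (nhds 0) := by
  rw [ENNReal.tendsto_nhds_zero]
  intro ε hε
  have h2 : Filter.Tendsto (fun n : ℕ => (2⁻¹ : ℝ≥0∞) ^ n) Filter.atTop (nhds 0) :=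
    ENNReal.tendsto_pow_atTop_nhds_zero_of_lt_one (by norm_num)
  have h2' := (ENNReal.tendsto_nhds_zero.mp h2) ε hε
  have hc' := (ENNReal.tendsto_nhds_zero.mp hc) 2⁻¹ (by norm_num)
  filter_upwards [h2', hc'] with n h1 h2
  calc c n ^ n ≤ (2⁻¹ : ℝ≥0∞) ^ n := pow_le_pow_left' h2 n
    _ ≤ ε := h1

variable {A1 A2 : Type*}
  [NormedRing A1] [NormedAlgebra ℂ A1] [CompleteSpace A1] [NormOneClass A1]
  [NormedRing A2] [NormedAlgebra ℂ A2] [CompleteSpace A2] [NormOneClass A2]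

set_option linter.unusedSectionVars false in
private lemma aux_root_tendsto (u : A1) (v : A2) (hu : spectralRadius ℂ u = 0) :
    Filter.Tendsto (fun n : ℕ => ((‖u ^ n‖₊ : ℝ≥0∞) * ‖v ^ n‖₊) ^ (1 / (n:ℝ)))
      Filter.atTop (nhds 0) := by
  have hgu := spectrum.pow_nnnorm_pow_one_div_tendsto_nhds_spectralRadius u
  have hgv := spectrum.pow_nnnorm_pow_one_div_tendsto_nhds_spectralRadius v
  rw [hu] at hgu
  have hfin : spectralRadius ℂ v ≠ ∞ :=
    ((spectrum.spectralRadius_le_nnnorm (𝕜 := ℂ) v).trans_lt ENNReal.coe_lt_top).ne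
  have h := ENNReal.Tendsto.mul hgu (Or.inr hfin) hgv (Or.inr (by simp))
  rw [zero_mul] at h
  refine h.congr fun n => ?_
  rw [ENNReal.mul_rpow_of_nonneg _ _ (by positivity)]

set_option linter.unusedSectionVars false in
private lemma aux_mul_tendsto (u : A1) (v : A2) (hu : spectralRadius ℂ u = 0) :
    Filter.Tendsto (fun n : ℕ => (‖u ^ n‖₊ : ℝ≥0∞) * ‖v ^ n‖₊) Filter.atTop (nhds 0) := by
  have h := aux_pow_tendsto (aux_root_tendsto u v hu)
  refine h.congr' ?_
  filter_upwards [Filter.eventually_ge_atTop 1] with n hn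
  have hne : ((n:ℝ)) ≠ 0 := by
    have : (1:ℝ) ≤ (n:ℝ) := by exact_mod_cast hn
    linarith
  rw [← ENNReal.rpow_natCast _ n, ← ENNReal.rpow_mul, one_div, inv_mul_cancel₀ hne,
    ENNReal.rpow_one]

set_option linter.unusedSectionVars false in
private lemma eq_zero_of_nnnorm_le {E : Type*} [NormedAddCommGroup E] (x : E) (u : A1) (v : A2)
    (hu : spectralRadius ℂ u = 0)
    (h : ∀ n : ℕ, 1 ≤ n → (‖x‖₊ : ℝ≥0∞) ≤ (‖u ^ n‖₊ : ℝ≥0∞) * ‖v ^ n‖₊) : x = 0 := by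
  have hle : (‖x‖₊ : ℝ≥0∞) ≤ 0 := by
    refine ge_of_tendsto (aux_mul_tendsto u v hu) ?_
    filter_upwards [Filter.eventually_ge_atTop 1] with n hn using h n hn
  simpa using le_antisymm hle zero_le

set_option linter.unusedSectionVars false in
private lemma radius_zero_of_nnnorm_le (R : A1) (u v : A2) (c : ℝ≥0∞) (hc : c ≠ ∞)
    (hu : spectralRadius ℂ u = 0)
    (h : ∀ n : ℕ, (‖R ^ (n+1)‖₊ : ℝ≥0∞) ≤ c * ((‖u ^ n‖₊ : ℝ≥0∞) * ‖v ^ n‖₊)) :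
    spectralRadius ℂ R = 0 := by
  set r := spectralRadius ℂ R with hr
  have hbase : ∀ n : ℕ, r ≤ (‖R ^ (n+1)‖₊ : ℝ≥0∞) ^ (1 / ((n:ℝ)+1)) := by
    intro n
    have := spectrum.spectralRadius_le_pow_nnnorm_pow_one_div ℂ R n
    simpa [nnnorm_one] using this
  set d : ℕ → ℝ≥0∞ := fun n => (‖u ^ n‖₊ : ℝ≥0∞) * ‖v ^ n‖₊ with hd
  have hdt : Filter.Tendsto d Filter.atTop (nhds 0) := aux_mul_tendsto u v hu
  have hpow : ∀ n : ℕ, r ^ (n+1) ≤ c * d n := by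
    intro n
    have h1 : r ^ (n+1) ≤ ((‖R ^ (n+1)‖₊ : ℝ≥0∞) ^ (1 / ((n:ℝ)+1))) ^ (n+1) :=
      pow_le_pow_left' (hbase n) _
    refine h1.trans ?_
    have he : (1 / ((n:ℝ)+1)) * ((n+1 : ℕ) : ℝ) = 1 := by
      push_cast; field_simp
    rw [← ENNReal.rpow_natCast (_ ^ _) (n+1), ← ENNReal.rpow_mul, he, ENNReal.rpow_one]
    exact h n
  rcases le_or_gt r 1 with hr1 | hr1
  · have key : ∀ n : ℕ, 1 ≤ n → r ^ (2:ℝ) ≤ (max c 1) * (d n) ^ (1/(n:ℝ)) := by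
      intro n hn
      have hnR : (0:ℝ) < (n:ℝ) := by exact_mod_cast hn
      have h1 : r ^ ((2:ℝ)) ≤ r ^ (((n:ℝ)+1) / n) := by
        apply ENNReal.rpow_le_rpow_of_exponent_ge hr1
        rw [div_le_iff₀ hnR]
        have : (1:ℝ) ≤ n := by exact_mod_cast hn
        linarith
      refine h1.trans ?_
      have h2 : r ^ (((n:ℝ)+1) / n) = (r ^ (n+1)) ^ (1/(n:ℝ)) := by
        rw [← ENNReal.rpow_natCast r (n+1), ← ENNReal.rpow_mul]
        push_cast
        ring_nf
      rw [h2]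
      have h3 : (r ^ (n+1)) ^ (1/(n:ℝ)) ≤ (c * d n) ^ (1/(n:ℝ)) :=
        ENNReal.rpow_le_rpow (hpow n) (by positivity)
      refine h3.trans ?_
      rw [ENNReal.mul_rpow_of_nonneg _ _ (by positivity)]
      gcongr
      rcases le_or_gt c 1 with hcle | hcgt
      · exact le_max_of_le_right ((ENNReal.rpow_le_rpow hcle (by positivity)).trans (by simp))
      · refine le_max_of_le_left ?_
        calc c ^ (1/(n:ℝ)) ≤ c ^ (1:ℝ) :=
              ENNReal.rpow_le_rpow_of_exponent_le hcgt.le (by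
                rw [div_le_one hnR]; exact_mod_cast hn)
          _ = c := ENNReal.rpow_one c
    have htend : Filter.Tendsto (fun n : ℕ => (max c 1) * (d n) ^ (1/(n:ℝ)))
        Filter.atTop (nhds 0) := by
      have := ENNReal.Tendsto.const_mul (aux_root_tendsto u v hu) (a := max c 1)
        (Or.inr (by simp [hc]))
      simpa using this
    have h0 : r ^ (2:ℝ) ≤ 0 := by
      refine ge_of_tendsto htend ?_
      filter_upwards [Filter.eventually_ge_atTop 1] with n hn using key n hn
    have hz : r ^ (2:ℝ) = 0 := le_antisymm h0 zero_le
    rcases (ENNReal.rpow_eq_zero_iff).mp hz with ⟨h', _⟩ | ⟨h', hlt⟩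
    · exact h'
    · norm_num at hlt
  · have key : ∀ n : ℕ, r ≤ c * d n := fun n =>
      (le_self_pow₀ hr1.le (Nat.succ_ne_zero n)).trans (hpow n)
    have htend : Filter.Tendsto (fun n : ℕ => c * d n) Filter.atTop (nhds 0) := by
      have := ENNReal.Tendsto.const_mul hdt (a := c) (Or.inr hc)
      simpa using this
    have h0 : r ≤ 0 := ge_of_tendsto htend (Filter.Eventually.of_forall key)
    exact le_antisymm h0 zero_le

end AuxAnalytic

section AuxOps

set_option linter.unusedSectionVars false

lemma isQn_iff [Nontrivial X] (R : X →L[ℂ] X) :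
    IsQuasinilpotent R ↔ spectralRadius ℂ R = 0 := by
  haveI : Nontrivial (X →L[ℂ] X) := by
    refine nontrivial_of_ne 1 0 fun h => ?_
    have h1 : ‖(1 : X →L[ℂ] X)‖ = 1 := norm_one
    rw [h, norm_zero] at h1
    norm_num at h1
  constructor
  · intro h
    rw [spectralRadius, h]
    simp
  · intro h
    have hne := spectrum.nonempty R
    rw [IsQuasinilpotent, Set.eq_singleton_iff_unique_mem]
    have hmem : ∀ k ∈ spectrum ℂ R, k = 0 := by
      intro k hk
      have : (‖k‖₊ : ENNReal) ≤ spectralRadius ℂ R :=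
        le_iSup₂ (f := fun k (_ : k ∈ spectrum ℂ R) => (‖k‖₊ : ENNReal)) k hk
      rw [h, le_zero_iff] at this
      simpa using this
    obtain ⟨k, hk⟩ := hne
    exact ⟨hmem k hk ▸ hk, hmem⟩

lemma gd_pows (a c : X →L[ℂ] X) (hac : a * c = c * a) (hcac : c * a * c = c) :
    ∀ n : ℕ, 1 ≤ n → a ^ n * c ^ n = a * c := by
  have hacc : (a*c) * (a*c) = a*c := by
    rw [mul_assoc, ← mul_assoc c a c, hcac]
  have h' : a*(a*c) = (a*c)*a := by nth_rewrite 1 [hac]; rw [← mul_assoc]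
  intro n hn
  induction n with
  | zero => omega
  | succ m ih =>
    rcases Nat.eq_or_lt_of_le hn with h1 | h1
    · simp [← h1]
    · have hm : 1 ≤ m := by omega
      have IH := ih hm
      rw [pow_succ' a m, pow_succ c m, mul_assoc a (a^m) _, ← mul_assoc (a^m) (c^m) c,
        IH, ← mul_assoc a (a*c) c, h', mul_assoc (a*c) a c, hacc]

lemma gd_step1 [Nontrivial X] (a b c : X →L[ℂ] X)
    (hb : IsGDrazinInv a b) (hc : IsGDrazinInv a c) :
    (1 - a*b) = (1 - a*b) * (1 - a*c) := by
  obtain ⟨hab, hbab, hqb⟩ := hb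
  obtain ⟨hac, hcac, _⟩ := hc
  set p := 1 - a*b with hp
  set q := 1 - a*c with hq
  have hap : a * p = a - a*a*b := by rw [hp, mul_sub, mul_one, mul_assoc]
  have hpa : p * a = a * p := by
    rw [hp, hap, sub_mul, one_mul, mul_assoc, ← hab, ← mul_assoc]
  have hqnap : spectralRadius ℂ (a * p) = 0 := by
    rw [hap]; exact (isQn_iff _).mp hqb
  have habb : (a*b) * (a*b) = a*b := by
    rw [mul_assoc, ← mul_assoc b a b, hbab]
  have hpp : p * p = p := by
    rw [hp, sub_mul, one_mul, mul_sub, mul_one, habb]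
    abel
  have hpan : ∀ n : ℕ, 1 ≤ n → (a*p)^n = a^n * p := by
    intro n hn
    induction n with
    | zero => omega
    | succ m ih =>
      rcases Nat.eq_or_lt_of_le hn with h1 | h1
      · simp [← h1]
      · have hm : 1 ≤ m := by omega
        rw [pow_succ, ih hm, mul_assoc (a^m) p _, ← mul_assoc p a p, hpa,
          mul_assoc a p p, hpp, ← mul_assoc, ← pow_succ]
  have hx : ∀ n : ℕ, 1 ≤ n → p - p*q = (a*p)^n * c^n := by
    intro n hn
    have h0 : p - p*q = p * (a*c) := by
      rw [hq, mul_sub, mul_one]; abel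
    have hpcomm : Commute p a := hpa
    rw [h0, ← gd_pows a c hac hcac n hn, ← mul_assoc, (hpcomm.pow_right n).eq,
      ← hpan n hn]
  have hzero : p - p*q = 0 := by
    refine eq_zero_of_nnnorm_le _ (a*p) c hqnap fun n hn => ?_
    rw [hx n hn]
    exact_mod_cast nnnorm_mul_le _ _
  rw [← sub_eq_zero]
  exact hzero

lemma gd_step2 [Nontrivial X] (a b c : X →L[ℂ] X)
    (hb : IsGDrazinInv a b) (hc : IsGDrazinInv a c) :
    (1 - a*b) = (1 - a*c) * (1 - a*b) := by
  obtain ⟨hab, hbab, hqb⟩ := hb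
  obtain ⟨hac, hcac, _⟩ := hc
  set p := 1 - a*b with hp
  set q := 1 - a*c with hq
  have hap : a * p = a - a*a*b := by rw [hp, mul_sub, mul_one, mul_assoc]
  have hpa : p * a = a * p := by
    rw [hp, hap, sub_mul, one_mul, mul_assoc, ← hab, ← mul_assoc]
  have hqnap : spectralRadius ℂ (a * p) = 0 := by
    rw [hap]; exact (isQn_iff _).mp hqb
  have habb : (a*b) * (a*b) = a*b := by
    rw [mul_assoc, ← mul_assoc b a b, hbab]
  have hpp : p * p = p := by
    rw [hp, sub_mul, one_mul, mul_sub, mul_one, habb]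
    abel
  have hpan : ∀ n : ℕ, 1 ≤ n → (a*p)^n = a^n * p := by
    intro n hn
    induction n with
    | zero => omega
    | succ m ih =>
      rcases Nat.eq_or_lt_of_le hn with h1 | h1
      · simp [← h1]
      · have hm : 1 ≤ m := by omega
        rw [pow_succ, ih hm, mul_assoc (a^m) p _, ← mul_assoc p a p, hpa,
          mul_assoc a p p, hpp, ← mul_assoc, ← pow_succ]
  have hx : ∀ n : ℕ, 1 ≤ n → p - q*p = c^n * (a^n * p) := by
    intro n hn
    have h0 : p - q*p = (a*c) * p := by
      rw [hq, sub_mul, one_mul]; abel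
    have haccomm : Commute a c := hac
    rw [h0, ← gd_pows a c hac hcac n hn, (haccomm.pow_pow n n).eq, mul_assoc]
  have hzero : p - q*p = 0 := by
    refine eq_zero_of_nnnorm_le _ (a*p) c hqnap fun n hn => ?_
    rw [hx n hn, ← hpan n hn]
    rw [mul_comm ((‖(a*p)^n‖₊ : ENNReal)) _]
    exact_mod_cast nnnorm_mul_le _ _
  rw [← sub_eq_zero]
  exact hzero

lemma gd_unique [Nontrivial X] (a b c : X →L[ℂ] X)
    (hb : IsGDrazinInv a b) (hc : IsGDrazinInv a c) : b = c := by
  have e2 := gd_step1 a c b hc hb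
  have e3 := gd_step2 a b c hb hc
  have hpq : (1 : X →L[ℂ] X) - a*b = 1 - a*c := e3.trans e2.symm
  have habac : a*b = a*c := sub_right_inj.mp hpq
  obtain ⟨hab, hbab, _⟩ := hb
  obtain ⟨hac, hcac, _⟩ := hc
  calc b = b*a*b := hbab.symm
    _ = (a*b)*b := by rw [← hab]
    _ = (a*c)*b := by rw [habac]
    _ = c*(a*b) := by rw [hac, mul_assoc]
    _ = c*(a*c) := by rw [habac]
    _ = c := by rw [← mul_assoc, hcac]

lemma idem_id_on {P : X →L[ℂ] X} (h : P * P = P) {x : X}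
    (hx : x ∈ LinearMap.range (P : X →ₗ[ℂ] X)) : P x = x := by
  obtain ⟨y, rfl⟩ := hx
  simpa [ContinuousLinearMap.mul_apply] using DFunLike.congr_fun h y

lemma op_unique {P Q : X →L[ℂ] X} {S : Submodule ℂ X}
    (hP : IsOrthoProjOnto P S) (hQ : IsOrthoProjOnto Q S) : P = Q := by
  obtain ⟨hPi, hPa, hPr⟩ := hP
  obtain ⟨hQi, hQa, hQr⟩ := hQ
  have h1 : Q * P = P := by
    ext x
    have hx : P x ∈ LinearMap.range (Q : X →ₗ[ℂ] X) := by rw [hQr, ← hPr]; exact ⟨x, rfl⟩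
    simpa [ContinuousLinearMap.mul_apply] using idem_id_on hQi hx
  have h2 : P * Q = Q := by
    ext x
    have hx : Q x ∈ LinearMap.range (P : X →ₗ[ℂ] X) := by rw [hPr, ← hQr]; exact ⟨x, rfl⟩
    simpa [ContinuousLinearMap.mul_apply] using idem_id_on hPi hx
  have h3 := congrArg ContinuousLinearMap.adjoint h1
  rw [ContinuousLinearMap.mul_def, ContinuousLinearMap.adjoint_comp, hPa, hQa] at h3
  rw [← ContinuousLinearMap.mul_def, h2] at h3
  exact h3.symm

lemma cline [Nontrivial X] [Nontrivial Y] (W : Y →L[ℂ] X) (A : X →L[ℂ] Y)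
    (e : Y →L[ℂ] Y) (he : IsGDrazinInv (A ∘L W) e) :
    IsGDrazinInv (W ∘L A) (W ∘L (e ∘L (e ∘L A))) := by
  obtain ⟨hFe, heFe, hQe⟩ := he
  have hFep : ∀ y, A (W (e y)) = e (A (W y)) := fun y => by
    simpa [ContinuousLinearMap.mul_apply] using DFunLike.congr_fun hFe y
  have heFep : ∀ y, e (A (W (e y))) = e y := fun y => by
    simpa [ContinuousLinearMap.mul_apply] using DFunLike.congr_fun heFe y
  have hEEFp : ∀ y, e (e (A (W y))) = e y := fun y => by
    rw [← hFep y, heFep y]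
  refine ⟨?_, ?_, ?_⟩
  · ext x
    simp only [ContinuousLinearMap.mul_apply, ContinuousLinearMap.comp_apply, hFep]
  · ext x
    simp only [ContinuousLinearMap.mul_apply, ContinuousLinearMap.comp_apply, hFep, hEEFp]
  · set F := A ∘L W with hF
    set K : Y →L[ℂ] Y := 1 - F * e with hK
    have hKA : ∀ x, K (A x) = A x - A (W (e (A x))) := fun x => by
      simp [hK, ContinuousLinearMap.sub_apply, ContinuousLinearMap.mul_apply, hF]
    have hRid : (W ∘L A) - (W ∘L A) * (W ∘L A) * (W ∘L (e ∘L (e ∘L A)))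
        = W ∘L (K ∘L A) := by
      ext x
      simp only [ContinuousLinearMap.sub_apply, ContinuousLinearMap.mul_apply,
        ContinuousLinearMap.comp_apply, hKA, map_sub, hFep, hEEFp]
    rw [hRid]
    set R : X →L[ℂ] X := W ∘L (K ∘L A) with hR
    have hAWF : ∀ z, A (W z) = F z := fun z => by simp [hF]
    have hRpow : ∀ n : ℕ, R ^ (n+1) = W ∘L ((K * (F*K)^n) ∘L A) := by
      intro n
      induction n with
      | zero => rw [pow_one, pow_zero, mul_one]
      | succ m ih =>
        have hs : R ^ (m+2) = R ^ (m+1) * R := pow_succ R (m+1)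
        rw [hs, ih]
        ext x
        simp only [ContinuousLinearMap.mul_apply, ContinuousLinearMap.comp_apply, hR]
        rw [hAWF (K (A x))]
        have h9 : ((F*K)^m) (F (K (A x))) = ((F*K)^m * (F*K)) (A x) := by
          simp [ContinuousLinearMap.mul_apply]
        rw [h9, ← pow_succ]
    have hFK : F * K = F - F * F * e := by
      rw [hK, mul_sub, mul_one, mul_assoc]
    have hurad : spectralRadius ℂ (F * K) = 0 := by
      rw [hFK]; exact (isQn_iff _).mp hQe
    have hbound : ∀ n : ℕ, (‖R ^ (n+1)‖₊ : ENNReal) ≤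
        (↑(‖W‖₊ * ‖K‖₊ * ‖A‖₊)) * ((‖(F*K) ^ n‖₊ : ENNReal) * ‖(1 : Y →L[ℂ] Y) ^ n‖₊) := by
      intro n
      rw [hRpow n]
      have h1 : ‖W ∘L ((K * (F*K)^n) ∘L A)‖₊ ≤ ‖W‖₊ * (‖K‖₊ * ‖(F*K)^n‖₊ * ‖A‖₊) := by
        refine (ContinuousLinearMap.opNNNorm_comp_le _ _).trans ?_
        refine mul_le_mul_right ((ContinuousLinearMap.opNNNorm_comp_le _ _).trans ?_) _
        exact mul_le_mul_left (nnnorm_mul_le _ _) _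
      calc (‖W ∘L ((K * (F*K)^n) ∘L A)‖₊ : ENNReal)
          ≤ ↑(‖W‖₊ * (‖K‖₊ * ‖(F*K)^n‖₊ * ‖A‖₊)) := by exact_mod_cast h1
        _ = (↑(‖W‖₊ * ‖K‖₊ * ‖A‖₊)) * ((‖(F*K) ^ n‖₊ : ENNReal) * ‖(1 : Y →L[ℂ] Y) ^ n‖₊) := by
            simp only [one_pow, nnnorm_one, ENNReal.coe_one, mul_one]
            push_cast
            ring
    rw [isQn_iff]
    exact radius_zero_of_nnnorm_le R (F*K) 1 _ ENNReal.coe_ne_top hurad hbound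

end AuxOps

theorem stmt17
    (W : Y →L[ℂ] X) (hW : W ≠ 0)
    (A Adw : X →L[ℂ] Y) (hAdw : IsWgDrazinInv W A Adw)
    (WAd : X →L[ℂ] X) (hWAd : IsGDrazinInv (W ∘L A) WAd)
    (AWd : Y →L[ℂ] Y) (hAWd : IsGDrazinInv (A ∘L W) AWd)
    (Ace : X →L[ℂ] Y) (hAce : IsWCoreEPInv W A WAd AWd Ace)
    (Aot : X →L[ℂ] Y) (hAot : Aot = Ace ∘L W ∘L Ace ∘L W ∘L A)
    (WAce : X →L[ℂ] X) (hWAce : IsCoreEPInv (W ∘L A) WAd WAce)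
    (WAot : X →L[ℂ] X) (hWAot : WAot = WAce * WAce * (W ∘L A)) :
    (∃ D C : X →L[ℂ] X,
      IsGDrazinInv ((W ∘L A) * (W ∘L A)) D ∧ IsCoreEPInv ((W ∘L A) * (W ∘L A)) D C) ∧
    (∀ D C : X →L[ℂ] X,
      IsGDrazinInv ((W ∘L A) * (W ∘L A)) D → IsCoreEPInv ((W ∘L A) * (W ∘L A)) D C →
        ((A ∘L W ∘L Aot = Aot ∘L W ∘L A) ↔
          WAot * WAot = C * C * ((W ∘L A) * (W ∘L A)))) ∧
    ((A ∘L W ∘L Aot = Aot ∘L W ∘L A) → Aot = Adw) := by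
  classical
  have hy0 : ∃ y : Y, W y ≠ 0 := by
    by_contra h
    push_neg at h
    exact hW (by ext y; simp [h y])
  obtain ⟨y0, hWy0⟩ := hy0
  haveI : Nontrivial X := ⟨⟨W y0, 0, hWy0⟩⟩
  haveI : Nontrivial Y := ⟨⟨y0, 0, fun h => hWy0 (by rw [h, map_zero])⟩⟩
  set T : X →L[ℂ] X := W ∘L A with hTdef
  obtain ⟨hTB, hBTB, hQb⟩ := id hWAd
  obtain ⟨hFe, heFe, hQe⟩ := id hAWd
  obtain ⟨⟨hPidem, hPadj, hPrange⟩, hGr⟩ := id hWAce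
  obtain ⟨⟨hP2idem, hP2adj, hP2range⟩, hAceR⟩ := id hAce
  obtain ⟨hAdw1, hAdw2, hAdw3⟩ := id hAdw
  set B : X →L[ℂ] X := WAd with hBdef
  set G : X →L[ℂ] X := WAce with hGdef
  set e : Y →L[ℂ] Y := AWd with hedef
  have hTp : ∀ z : X, T z = W (A z) := fun z => rfl
  have hTBp : ∀ x, T (B x) = B (T x) := fun x => by
    simpa [ContinuousLinearMap.mul_apply] using DFunLike.congr_fun hTB x
  have hBTBp : ∀ x, B (T (B x)) = B x := fun x => by
    simpa [ContinuousLinearMap.mul_apply] using DFunLike.congr_fun hBTB x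
  have hBBTp : ∀ x, B (B (T x)) = B x := fun x => by
    rw [← hTBp x, hBTBp x]
  have killT : ∀ v : X, v ∈ LinearMap.range (B : X →ₗ[ℂ] X) → T v = 0 → v = 0 := by
    rintro v ⟨u, rfl⟩ h0
    simp only [ContinuousLinearMap.coe_coe] at h0 ⊢
    rw [← hBTBp u, h0, map_zero]
  have killT2 : ∀ v : X, v ∈ LinearMap.range (B : X →ₗ[ℂ] X) → T (T v) = 0 → v = 0 := by
    rintro v ⟨u, rfl⟩ h0
    have key : B u = B (T (B (T (B u)))) := by
      rw [hBTBp (T (B u)), hBTBp u]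
    rw [hTBp (T (B u))] at key
    simp only [ContinuousLinearMap.coe_coe] at h0 ⊢
    rw [key, h0, map_zero, map_zero]
  have hrangeBB : LinearMap.range ((B * B : X →L[ℂ] X) : X →ₗ[ℂ] X) = LinearMap.range (B : X →ₗ[ℂ] X) := by
    apply le_antisymm
    · rintro v ⟨u, rfl⟩
      exact ⟨B u, rfl⟩
    · rintro v ⟨u, rfl⟩
      exact ⟨T u, by simpa [ContinuousLinearMap.mul_apply] using hBBTp u⟩
  have hBeq : B = W ∘L (e ∘L (e ∘L A)) :=
    gd_unique (W ∘L A) B _ hWAd (cline W A e hAWd)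
  have heeq : e = A ∘L (B ∘L (B ∘L W)) :=
    gd_unique (A ∘L W) e _ hAWd (cline A W B hWAd)
  have heYp : ∀ y, e y = A (B (B (W y))) := fun y => by
    conv_lhs => rw [heeq]
    rfl
  have heFep : ∀ y, e (A (W (e y))) = e y := fun y => by
    simpa [ContinuousLinearMap.mul_apply] using DFunLike.congr_fun heFe y
  have hWe_range : ∀ y, W (e y) ∈ LinearMap.range (B : X →ₗ[ℂ] X) := by
    intro y
    refine ⟨T (B (W y)), ?_⟩
    simp only [ContinuousLinearMap.coe_coe]
    rw [← hTBp (B (W y)), hTp (B (B (W y))), ← heYp y]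
  have killY : ∀ v : Y, v ∈ LinearMap.range (e : Y →ₗ[ℂ] Y) → W (A (W v)) = 0 → v = 0 := by
    rintro v ⟨u, rfl⟩ h0
    have h1 : W (e u) = 0 := by
      refine killT _ (hWe_range u) ?_
      rw [hTp]
      exact h0
    simp only [ContinuousLinearMap.coe_coe]
    rw [← heFep u, h1, map_zero, map_zero]
  have hPeq : (W ∘L A ∘L W ∘L Ace) = T * G :=
    op_unique ⟨hP2idem, hP2adj, hP2range⟩ ⟨hPidem, hPadj, hPrange⟩
  have hPeqp : ∀ x, W (A (W (Ace x))) = T (G x) := fun x => by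
    simpa [ContinuousLinearMap.mul_apply] using DFunLike.congr_fun hPeq x
  have hWAcep : ∀ x, W (Ace x) = G x := by
    intro x
    have hmem : W (Ace x) - G x ∈ LinearMap.range (B : X →ₗ[ℂ] X) := by
      obtain ⟨u, hu⟩ := hAceR (⟨x, rfl⟩ : Ace x ∈ LinearMap.range (Ace : X →ₗ[ℂ] Y))
      refine Submodule.sub_mem _ ?_ (hGr ⟨x, rfl⟩)
      rw [← hu]
      exact hWe_range u
    have h0 : T (W (Ace x) - G x) = 0 := by
      rw [map_sub, hTp (W (Ace x)), hPeqp x]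
      simp
    exact sub_eq_zero.mp (killT _ hmem h0)
  have hPGp : ∀ z, T (G (G z)) = G z := by
    intro z
    have h1 : (T * G) (G z) = G z :=
      idem_id_on hPidem (by rw [hPrange]; exact hGr ⟨z, rfl⟩)
    simpa [ContinuousLinearMap.mul_apply] using h1
  have hTGBp : ∀ x, T (G (B x)) = B x := by
    intro x
    have h1 : (T * G) (B x) = B x :=
      idem_id_on hPidem (by rw [hPrange]; exact ⟨x, rfl⟩)
    simpa [ContinuousLinearMap.mul_apply] using h1
  have hTBBp : ∀ u, T (B (B u)) = B u := fun u => by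
    rw [hTBp (B u), hBTBp u]
  have hBPGp : ∀ z, B (T (G z)) = G z := by
    intro z
    have hmem : B (T (G z)) - G z ∈ LinearMap.range (B : X →ₗ[ℂ] X) :=
      Submodule.sub_mem _ ⟨T (G z), rfl⟩ (hGr ⟨z, rfl⟩)
    have hPz : T (G z) ∈ LinearMap.range (B : X →ₗ[ℂ] X) := by
      have h2 : T (G z) ∈ LinearMap.range ((T * G : X →L[ℂ] X) : X →ₗ[ℂ] X) :=
        ⟨z, by simp [ContinuousLinearMap.mul_apply]⟩
      rw [hPrange] at h2
      exact h2
    obtain ⟨u, hu⟩ := hPz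
    simp only [ContinuousLinearMap.coe_coe] at hu
    have h0 : T (B (T (G z)) - G z) = 0 := by
      rw [map_sub, ← hu, hTBBp u, hu]
      simp
    exact sub_eq_zero.mp (killT _ hmem h0)
  have hABe : ∀ u, e (A u) = A (B u) := fun u => by
    rw [heYp (A u), ← hTp u, hBBTp u]
  have hAce_eq : ∀ x, Ace x = A (G (G x)) := by
    intro x
    have hAGG_mem : A (G (G x)) ∈ LinearMap.range (e : Y →ₗ[ℂ] Y) := by
      obtain ⟨u, hu⟩ := hGr (⟨G x, rfl⟩ : G (G x) ∈ LinearMap.range (G : X →ₗ[ℂ] X))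
      exact ⟨A u, by simp only [ContinuousLinearMap.coe_coe] at hu ⊢; rw [hABe u, hu]⟩
    have hmem : Ace x - A (G (G x)) ∈ LinearMap.range (e : Y →ₗ[ℂ] Y) :=
      Submodule.sub_mem _ (hAceR ⟨x, rfl⟩) hAGG_mem
    have h0 : W (A (W (Ace x - A (G (G x))))) = 0 := by
      simp only [map_sub]
      rw [hPeqp x]
      have h1 : W (A (G (G x))) = G x := by rw [← hTp (G (G x)), hPGp x]
      rw [h1, ← hTp (G x), sub_self]
    exact sub_eq_zero.mp (killY _ hmem h0)
  have hAdw1p : ∀ z, A (W (Adw z)) = Adw (W (A z)) := fun z => by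
    simpa using DFunLike.congr_fun hAdw1 z
  have hAdw2p : ∀ z, Adw (W (A (W (Adw z)))) = Adw z := fun z => by
    simpa using DFunLike.congr_fun hAdw2 z
  have hWAdw_gd : IsGDrazinInv T (W ∘L Adw) := by
    refine ⟨?_, ?_, ?_⟩
    · ext x
      show W (A (W (Adw x))) = W (Adw (W (A x)))
      exact congrArg W (hAdw1p x)
    · ext x
      show W (Adw (W (A (W (Adw x))))) = W (Adw x)
      exact congrArg W (hAdw2p x)
    · have hqe2 : T - T*T*(W ∘L Adw) = W ∘L (A - A ∘L W ∘L Adw ∘L W ∘L A) := by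
        ext x
        simp only [ContinuousLinearMap.sub_apply, ContinuousLinearMap.mul_apply,
          ContinuousLinearMap.comp_apply, map_sub]
        rw [hTp x, hTp (W (Adw x)), hTp (W (A (W (Adw x)))), hAdw1p x]
      rw [hqe2]
      exact hAdw3
  have hWAdwB : W ∘L Adw = B := gd_unique T _ B hWAdw_gd hWAd
  have hWAdwBp : ∀ z, W (Adw z) = B z := fun z => by
    simpa using DFunLike.congr_fun hWAdwB z
  have hAdw_eqp : ∀ x, Adw x = A (B (B x)) := by
    intro x
    calc Adw x = Adw (W (A (W (Adw x)))) := (hAdw2p x).symm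
      _ = Adw (W (A (B x))) := by rw [hWAdwBp x]
      _ = A (W (Adw (B x))) := (hAdw1p (B x)).symm
      _ = A (B (B x)) := by rw [hWAdwBp (B x)]
  have hQrad : spectralRadius ℂ (T - T*T*B) = 0 := (isQn_iff _).mp hQb
  have hD0 : IsGDrazinInv (T*T) (B*B) := by
    refine ⟨?_, ?_, ?_⟩
    · ext x
      simp only [ContinuousLinearMap.mul_apply, hTBp]
    · ext x
      simp only [ContinuousLinearMap.mul_apply, hTBp, hBBTp]
    · have hQQ : T*T - (T*T)*(T*T)*(B*B) = (T - T*T*B)*(T - T*T*B) := by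
        ext x
        simp only [ContinuousLinearMap.sub_apply, ContinuousLinearMap.mul_apply,
          map_sub, hTBp, hBBTp]
        abel
      rw [hQQ]
      rw [isQn_iff]
      refine radius_zero_of_nnnorm_le _ (T - T*T*B) (T - T*T*B)
        (↑(‖(T - T*T*B)*(T - T*T*B)‖₊)) ENNReal.coe_ne_top hQrad ?_
      intro n
      have hsplit : ((T - T*T*B)*(T - T*T*B))^(n+1)
          = ((T - T*T*B)*(T - T*T*B)) * ((T - T*T*B)^n * (T - T*T*B)^n) := by
        calc ((T - T*T*B)*(T - T*T*B))^(n+1) = ((T - T*T*B)^2)^(n+1) := by rw [pow_two]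
          _ = (T - T*T*B)^(2*(n+1)) := by rw [← pow_mul]
          _ = (T - T*T*B)^(2+(n+n)) := by congr 1; ring
          _ = (T - T*T*B)^2 * ((T - T*T*B)^n * (T - T*T*B)^n) := by
              rw [pow_add, pow_add]
          _ = ((T - T*T*B)*(T - T*T*B)) * ((T - T*T*B)^n * (T - T*T*B)^n) := by
              rw [pow_two]
      rw [hsplit]
      have h1 : ‖((T - T*T*B)*(T - T*T*B)) * ((T - T*T*B)^n * (T - T*T*B)^n)‖₊
          ≤ ‖(T - T*T*B)*(T - T*T*B)‖₊ * (‖(T - T*T*B)^n‖₊ * ‖(T - T*T*B)^n‖₊) := by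
        refine (nnnorm_mul_le _ _).trans ?_
        exact mul_le_mul_right (nnnorm_mul_le _ _) _
      exact_mod_cast h1
  have hTTGGop : (T*T)*(G*G) = T*G := by
    ext x
    simp only [ContinuousLinearMap.mul_apply]
    exact congrArg T (hPGp x)
  have hC0 : IsCoreEPInv (T*T) (B*B) (G*G) := by
    constructor
    · rw [hTTGGop, hrangeBB]
      exact ⟨hPidem, hPadj, hPrange⟩
    · rw [hrangeBB]
      rintro v ⟨u, rfl⟩
      simpa [ContinuousLinearMap.mul_apply] using
        hGr (⟨G u, rfl⟩ : G (G u) ∈ LinearMap.range (G : X →ₗ[ℂ] X))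
  have hAotp : ∀ x, Aot x = A (G (G (G (T x)))) := by
    intro x
    rw [hAot]
    show Ace (W (Ace (W (A x)))) = _
    rw [hWAcep (W (A x)), ← hTp x, hAce_eq (G (T x))]
  have hAWAotp : ∀ x, A (W (Aot x)) = A (G (G (T x))) := by
    intro x
    rw [hAotp x, ← hTp (G (G (G (T x)))), hPGp (G (T x))]
  have hAotWAp : ∀ x, Aot (W (A x)) = A (G (G (G (T (T x))))) := by
    intro x
    rw [← hTp x, hAotp (T x)]
  have hLHS_iff : (A ∘L W ∘L Aot = Aot ∘L W ∘L A)
      ↔ ∀ x, A (G (G (T x))) = A (G (G (G (T (T x))))) := by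
    constructor
    · intro hL x
      have h1 := DFunLike.congr_fun hL x
      simp only [ContinuousLinearMap.comp_apply] at h1
      rw [hAWAotp x, hAotWAp x] at h1
      exact h1
    · intro hp
      ext x
      simp only [ContinuousLinearMap.comp_apply]
      rw [hAWAotp x, hAotWAp x]
      exact hp x
  have hGT_of : (A ∘L W ∘L Aot = Aot ∘L W ∘L A) → ∀ x, G (T x) = G (G (T (T x))) := by
    intro hL x
    have h1 := (hLHS_iff.mp hL) x
    have h2 := congrArg W h1
    rw [← hTp (G (G (T x))), ← hTp (G (G (G (T (T x)))))] at h2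
    rw [hPGp (T x), hPGp (G (T (T x)))] at h2
    exact h2
  refine ⟨⟨B*B, G*G, hD0, hC0⟩, ?_, ?_⟩
  · intro D C hD hC
    have hDBB : D = B*B := gd_unique (T*T) D (B*B) hD hD0
    obtain ⟨hCproj, hCle⟩ := hC
    rw [hDBB, hrangeBB] at hCproj hCle
    have hCeq : (T*T)*C = T*G := op_unique hCproj ⟨hPidem, hPadj, hPrange⟩
    have hCp : ∀ x, T (T (C x)) = T (G x) := fun x => by
      simpa [ContinuousLinearMap.mul_apply] using DFunLike.congr_fun hCeq x
    have hCG : C = G*G := by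
      ext x
      have hmem : C x - (G*G) x ∈ LinearMap.range (B : X →ₗ[ℂ] X) := by
        refine Submodule.sub_mem _ (hCle ⟨x, rfl⟩) ?_
        simpa [ContinuousLinearMap.mul_apply] using
          hGr (⟨G x, rfl⟩ : G (G x) ∈ LinearMap.range (G : X →ₗ[ℂ] X))
      have h0 : T (T (C x - (G*G) x)) = 0 := by
        rw [map_sub, map_sub]
        have h2 : T (T ((G*G) x)) = T (G x) := by
          simpa [ContinuousLinearMap.mul_apply] using congrArg T (hPGp x)
        rw [hCp x, h2, sub_self]
      exact sub_eq_zero.mp (killT2 _ hmem h0)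
    rw [hWAot, hCG]
    constructor
    · intro hL
      have hGTp := hGT_of hL
      ext x
      simp only [ContinuousLinearMap.mul_apply]
      rw [hPGp (T x), hGTp x]
    · intro hR2
      have hii : ∀ x, G (G (G (T x))) = G (G (G (G (T (T x))))) := by
        intro x
        have h1 := DFunLike.congr_fun hR2 x
        simp only [ContinuousLinearMap.mul_apply] at h1
        rw [hPGp (T x)] at h1
        exact h1
      have hiii : ∀ x, G (G (T x)) = G (G (G (T (T x)))) := by
        intro x
        have h1 : G (G (T x)) = T (G (G (G (T x)))) := (hPGp (G (T x))).symm
        rw [h1, hii x, hPGp (G (G (T (T x))))]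
      exact hLHS_iff.mpr fun x => congrArg A (hiii x)
  · intro hL
    have hGTp := hGT_of hL
    have hSax1 : T * (G*G*T) = (G*G*T) * T := by
      ext x
      simp only [ContinuousLinearMap.mul_apply]
      rw [hPGp (T x), hGTp x]
    have hSax2 : (G*G*T) * T * (G*G*T) = G*G*T := by
      ext x
      simp only [ContinuousLinearMap.mul_apply]
      rw [hPGp (T x), hGTp x, hPGp (T (T x))]
    have hQP0 : ∀ x, (T - T*T*B) (T (G x)) = 0 := by
      intro x
      simp only [ContinuousLinearMap.sub_apply, ContinuousLinearMap.mul_apply]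
      rw [hBPGp x]
      exact sub_self _
    have hRid : T - T*T*(G*G*T) = (1 - T*G) * (T - T*T*B) := by
      ext x
      simp only [ContinuousLinearMap.sub_apply, ContinuousLinearMap.mul_apply,
        ContinuousLinearMap.one_apply, map_sub, hTBp]
      rw [hTGBp (T (T x)), hPGp (T x)]
      abel
    have hQ1P : (T - T*T*B) * (1 - T*G) = (T - T*T*B) := by
      have hQTG : (T - T*T*B) * (T*G) = 0 := by
        ext x
        simp only [ContinuousLinearMap.mul_apply, ContinuousLinearMap.zero_apply]
        exact hQP0 x
      rw [mul_sub, mul_one, hQTG, sub_zero]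
    have hQpow1P : ∀ n : ℕ, (T - T*T*B)^(n+1) * (1 - T*G) = (T - T*T*B)^(n+1) := by
      intro n
      rw [pow_succ, mul_assoc, hQ1P]
    have hRpow : ∀ n : ℕ, (T - T*T*(G*G*T))^(n+1) = (1 - T*G) * (T - T*T*B)^(n+1) := by
      intro n
      induction n with
      | zero => rw [pow_one, pow_one, hRid]
      | succ m ih =>
        rw [pow_succ, ih, hRid, mul_assoc,
          ← mul_assoc ((T - T*T*B)^(m+1)) (1 - T*G) _, hQpow1P m, ← pow_succ]
    have hax3 : IsQuasinilpotent (T - T*T*(G*G*T)) := by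
      rw [isQn_iff]
      refine radius_zero_of_nnnorm_le _ (T - T*T*B) 1
        (↑(‖(1:X →L[ℂ] X) - T*G‖₊ * ‖T - T*T*B‖₊)) ENNReal.coe_ne_top hQrad ?_
      intro n
      rw [hRpow n]
      have h1 : ‖(1 - T*G) * (T - T*T*B)^(n+1)‖₊
          ≤ ‖(1:X →L[ℂ] X) - T*G‖₊ * (‖T - T*T*B‖₊ * ‖(T - T*T*B)^n‖₊) := by
        refine (nnnorm_mul_le _ _).trans ?_
        refine mul_le_mul_right ?_ _
        rw [pow_succ']
        exact nnnorm_mul_le _ _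
      calc ((‖(1 - T*G) * (T - T*T*B)^(n+1)‖₊ : ENNReal))
          ≤ ↑(‖(1:X →L[ℂ] X) - T*G‖₊ * (‖T - T*T*B‖₊ * ‖(T - T*T*B)^n‖₊)) := by
            exact_mod_cast h1
        _ = ↑(‖(1:X →L[ℂ] X) - T*G‖₊ * ‖T - T*T*B‖₊)
            * ((‖(T - T*T*B)^n‖₊ : ENNReal) * ‖(1:X →L[ℂ] X)^n‖₊) := by
            simp only [one_pow, nnnorm_one, ENNReal.coe_one, mul_one]
            push_cast
            ring
    have hSB : G*G*T = B := gd_unique T (G*G*T) B ⟨hSax1, hSax2, hax3⟩ hWAd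
    have hSBp : ∀ x, G (G (T x)) = B x := fun x => by
      simpa [ContinuousLinearMap.mul_apply] using DFunLike.congr_fun hSB x
    have hGBp : ∀ z, G (B z) = B (B z) := fun z => by
      rw [← hBPGp (B z), hTGBp z]
    ext x
    rw [hAotp x, hAdw_eqp x, hSBp x, hGBp x]
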